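/- Let P1 and P2 be paths on the triangular grid, each with exactly one bend. Suppose some segment of P1 and some segment of P2 lie on the same grid line l and these two segments have exactly one grid point b in common. If E(P1) ∩ E(P2) ≠ ∅, then b is the bend point of both P1 and P2, b is an endpoint of at least one edge of E(P1) ∩ E(P2), and E(P1) ∩ E(P2) is not contained in the set of edges lying on l. -/

import Mathlib

/-- The triangular grid: the simple graph on `ℤ × ℤ` where two points are adjacent
iff their difference is `±(1,0)`, `±(0,1)` or `±(1,1)`. -/
def TGrid : SimpleGraph (ℤ × ℤ) where
  Adj u v :=
    (v.1 - u.1 = 1 ∧ v.2 - u.2 = 0) ∨ (v.1 - u.1 = -1 ∧ v.2 - u.2 = 0) ∨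
    (v.1 - u.1 = 0 ∧ v.2 - u.2 = 1) ∨ (v.1 - u.1 = 0 ∧ v.2 - u.2 = -1) ∨
    (v.1 - u.1 = 1 ∧ v.2 - u.2 = 1) ∨ (v.1 - u.1 = -1 ∧ v.2 - u.2 = -1)
  symm := ⟨by intro u v h; omega⟩
  loopless := ⟨by intro u h; omega⟩

/-- The (symmetric) direction datum of a grid edge: the pair of absolute coordinate
differences.  For grid edges this is `(1,0)` (horizontal), `(0,1)` (vertical) or
`(1,1)` (diagonal). -/
def edir (e : Sym2 (ℤ × ℤ)) : ℤ × ℤ :=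
  Sym2.lift ⟨fun u v => (|u.1 - v.1|, |u.2 - v.2|), by
    intro u v; simp [abs_sub_comm]⟩ e

/-- The `t`-th edge of a walk. -/
def wEdge {u v : ℤ × ℤ} (p : TGrid.Walk u v) (t : ℕ) : Sym2 (ℤ × ℤ) :=
  s(p.getVert t, p.getVert (t + 1))

/-- The number of bends of a walk: the number of consecutive pairs of edges with
different directions. -/
def bendCount {u v : ℤ × ℤ} (p : TGrid.Walk u v) : ℕ :=
  (List.range (p.length - 1)).countP
    (fun i => decide (edir (wEdge p i) ≠ edir (wEdge p (i + 1))))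

/-- `b` is a bend point of the walk `p`. -/
def IsBendAt {u v : ℤ × ℤ} (p : TGrid.Walk u v) (b : ℤ × ℤ) : Prop :=
  ∃ i : ℕ, i + 2 ≤ p.length ∧ p.getVert (i + 1) = b ∧
    edir (wEdge p i) ≠ edir (wEdge p (i + 1))

/-- A (nontrivial simple) path on the triangular grid. -/
structure TPath where
  src : ℤ × ℤ
  dst : ℤ × ℤ
  walk : TGrid.Walk src dst
  isPath : walk.IsPath
  nontriv : 0 < walk.length

/-- The set of grid edges of a path. -/
def pEdges (P : TPath) : Set (Sym2 (ℤ × ℤ)) := {e | e ∈ P.walk.edges}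

/-- The set of grid points of a path. -/
def pPts (P : TPath) : Set (ℤ × ℤ) := {q | q ∈ P.walk.support}

/-- A segment of a path: a maximal straight (bend-free) subpath, recorded by the
interval of edge indices `[i, j)` it occupies. -/
structure Segment (P : TPath) where
  i : ℕ
  j : ℕ
  lt : i < j
  le : j ≤ P.walk.length
  straight : ∀ t, i ≤ t → t < j → edir (wEdge P.walk t) = edir (wEdge P.walk i)
  maxLeft : i = 0 ∨ edir (wEdge P.walk (i - 1)) ≠ edir (wEdge P.walk i)
  maxRight : j = P.walk.length ∨ edir (wEdge P.walk (j - 1)) ≠ edir (wEdge P.walk j)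

/-- The set of grid edges of a segment. -/
def Segment.edges {P : TPath} (s : Segment P) : Set (Sym2 (ℤ × ℤ)) :=
  {e | ∃ t, s.i ≤ t ∧ t < s.j ∧ e = wEdge P.walk t}

/-- The set of grid points of a segment. -/
def Segment.pts {P : TPath} (s : Segment P) : Set (ℤ × ℤ) :=
  {q | ∃ t, s.i ≤ t ∧ t ≤ s.j ∧ q = P.walk.getVert t}

/-- The direction of a segment. -/
def Segment.dir {P : TPath} (s : Segment P) : ℤ × ℤ := edir (wEdge P.walk s.i)

/-- The three directions of the triangular grid. -/
inductive Dir | H | V | D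
deriving DecidableEq

/-- The direction of the (straight) line from `a` to `b`. -/
def dirOf (a b : ℤ × ℤ) : Dir :=
  if a.2 = b.2 then .H else if a.1 = b.1 then .V else .D

/-- A grid line of the triangular grid: a full horizontal, vertical or diagonal line. -/
structure GridLine where
  dir : Dir
  c : ℤ

/-- The parametrization of the points of a grid line. -/
def GridLine.pt (l : GridLine) (t : ℤ) : ℤ × ℤ :=
  match l.dir with
  | .H => (t, l.c)
  | .V => (l.c, t)
  | .D => (l.c + t, t)

/-- The `t`-th edge of a grid line. -/
def GridLine.edge (l : GridLine) (t : ℤ) : Sym2 (ℤ × ℤ) := s(l.pt t, l.pt (t + 1))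

/-- The set of grid points of a grid line. -/
def GridLine.pts (l : GridLine) : Set (ℤ × ℤ) := Set.range l.pt

/-- The set of grid edges of a grid line. -/
def GridLine.edges (l : GridLine) : Set (Sym2 (ℤ × ℤ)) := Set.range l.edge

/-- A right triangle of the triangular grid, given by a base corner `p`, a leg
length `k ≥ 1`, and one of the two possible orientations. -/
structure RightTri where
  p : ℤ × ℤ
  k : ℤ
  hk : 1 ≤ k
  orientA : Bool

/-- The set of grid edges of a right triangle. -/
def RightTri.edges (T : RightTri) : Set (Sym2 (ℤ × ℤ)) :=
  if T.orientA then
    {e | ∃ t : ℤ, 0 ≤ t ∧ t < T.k ∧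
      (e = s((T.p.1 + t, T.p.2), (T.p.1 + t + 1, T.p.2)) ∨
       e = s((T.p.1 + T.k, T.p.2 + t), (T.p.1 + T.k, T.p.2 + t + 1)) ∨
       e = s((T.p.1 + t, T.p.2 + t), (T.p.1 + t + 1, T.p.2 + t + 1)))}
  else
    {e | ∃ t : ℤ, 0 ≤ t ∧ t < T.k ∧
      (e = s((T.p.1, T.p.2 + t), (T.p.1, T.p.2 + t + 1)) ∨
       e = s((T.p.1 + t, T.p.2 + T.k), (T.p.1 + t + 1, T.p.2 + T.k)) ∨
       e = s((T.p.1 + t, T.p.2 + t), (T.p.1 + t + 1, T.p.2 + t + 1)))}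

/-- The three corners of a right triangle. -/
def RightTri.corners (T : RightTri) : Set (ℤ × ℤ) :=
  if T.orientA then {T.p, (T.p.1 + T.k, T.p.2), (T.p.1 + T.k, T.p.2 + T.k)}
  else {T.p, (T.p.1, T.p.2 + T.k), (T.p.1 + T.k, T.p.2 + T.k)}

/-- `U(𝒫)`: the subgraph of the grid formed by all segments of members of the family
that share at least one grid edge with another member, given by its set of edges. -/
def UEdges {ι : Type} (P : ι → TPath) : Set (Sym2 (ℤ × ℤ)) :=
  {e | ∃ i : ι, ∃ s : Segment (P i), e ∈ s.edges ∧
        ∃ j : ι, j ≠ i ∧ (s.edges ∩ pEdges (P j)).Nonempty}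

/-- A B₁-EPGₜ representation of a simple graph `G`: a family of at most-one-bend
paths on the triangular grid whose edge-intersection graph is `G`. -/
def IsB1EPGtRep {V : Type} (G : SimpleGraph V) (Rep : V → TPath) : Prop :=
  (∀ v, bendCount (Rep v).walk ≤ 1) ∧
  ∀ u v : V, u ≠ v → (G.Adj u v ↔ (pEdges (Rep u) ∩ pEdges (Rep v)).Nonempty)

/-!
A one-bend path whose segment `s` lies on the grid line `l` consists of `s` and a *leg*: a
straight ray that leaves `l` at the bend point in a direction transversal to `l`. The two
segments share only the point `b`, so they share no edge, and an edge on `l` never lies on a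
transversal leg; hence every common edge lies on both legs. Applying the linear functional
that cuts out `l`, two transversal rays starting on `l` share an edge only if they have the same
origin and the same direction. So both legs start at the same point, which lies on both segments
and is therefore `b`, and their common first edge contains `b` and leaves `l`.
-/

def gridSteps : Finset (ℤ × ℤ) := {(1, 0), (-1, 0), (0, 1), (0, -1), (1, 1), (-1, -1)}

lemma tGrid_adj_iff {p q : ℤ × ℤ} : TGrid.Adj p q ↔ q - p ∈ gridSteps := by
  simp only [TGrid, gridSteps, Finset.mem_insert, Finset.mem_singleton, Prod.ext_iff,
    Prod.fst_sub, Prod.snd_sub]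

lemma edir_mk (p q : ℤ × ℤ) : edir s(p, q) = (|(q - p).1|, |(q - p).2|) := by
  simp [edir, abs_sub_comm]

lemma gridSteps_eq_or_eq_neg_of_abs_eq {u w : ℤ × ℤ} (hu : u ∈ gridSteps) (hw : w ∈ gridSteps)
    (h : (|u.1|, |u.2|) = (|w.1|, |w.2|)) : w = u ∨ w = -u := by
  have key : ∀ u ∈ gridSteps, ∀ w ∈ gridSteps,
      (|u.1|, |u.2|) = (|w.1|, |w.2|) → w = u ∨ w = -u := by decide
  exact key u hu w hw h

def rayEdge {M : Type*} [AddCommMonoid M] (b u : M) (k : ℕ) : Sym2 M :=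
  s(b + k • u, b + (k + 1) • u)

@[simp]
lemma rayEdge_zero {M : Type*} [AddCommMonoid M] (b u : M) : rayEdge b u 0 = s(b, b + u) := by
  simp [rayEdge]

lemma eq_and_eq_of_rayEdge_eq {M : Type*} [AddCommGroup M] (φ : M →+ ℤ) {b₁ b₂ u₁ u₂ : M}
    {k₁ k₂ : ℕ} (hb : φ b₁ = φ b₂) (hu : φ u₂ ≠ 0) (h : rayEdge b₁ u₁ k₁ = rayEdge b₂ u₂ k₂) :
    b₁ = b₂ ∧ u₁ = u₂ := by
  rcases Sym2.eq_iff.mp h with ⟨h₁, h₂⟩ | ⟨h₁, h₂⟩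
  · obtain rfl : u₁ = u₂ := by
      simpa [succ_nsmul, ← add_assoc, h₁] using h₂
    have hφ := congrArg φ h₁
    simp only [map_add, map_nsmul, hb, add_right_inj, nsmul_eq_mul] at hφ
    obtain rfl : k₁ = k₂ := by exact_mod_cast mul_right_cancel₀ hu hφ
    exact ⟨add_right_cancel h₁, rfl⟩
  · have hφ₁ := congrArg φ h₁
    have hφ₂ := congrArg φ h₂
    simp only [map_add, map_nsmul, hb, add_right_inj, nsmul_eq_mul] at hφ₁ hφ₂
    push_cast at hφ₁ hφ₂
    have hzero : ((k₁ : ℤ) + k₂ + 1) * φ u₂ = 0 := by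
      linear_combination (k₁ : ℤ) * hφ₂ - (k₁ + 1 : ℤ) * hφ₁
    exact absurd ((mul_eq_zero.mp hzero).resolve_left (by positivity)) hu

namespace GridLine

/-- A linear functional whose level set at `l.c` is `l.pts`; on grid steps it vanishes exactly
along `l`. -/
def normal (l : GridLine) : ℤ × ℤ →+ ℤ :=
  match l.dir with
  | .H => AddMonoidHom.snd ℤ ℤ
  | .V => AddMonoidHom.fst ℤ ℤ
  | .D => AddMonoidHom.fst ℤ ℤ - AddMonoidHom.snd ℤ ℤ

variable (l : GridLine)

lemma normal_pt (t : ℤ) : l.normal (l.pt t) = l.c := by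
  obtain ⟨_ | _ | _, c⟩ := l <;> simp [normal, pt]

lemma normal_eq_of_mem_edges {e : Sym2 (ℤ × ℤ)} {p : ℤ × ℤ} (he : e ∈ l.edges) (hp : p ∈ e) :
    l.normal p = l.c := by
  obtain ⟨t, rfl⟩ := he
  rcases Sym2.mem_iff.mp hp with rfl | rfl <;> exact l.normal_pt _

lemma normal_eq_zero_of_rayEdge_mem_edges {b u : ℤ × ℤ} {k : ℕ} (h : rayEdge b u k ∈ l.edges) :
    l.normal u = 0 := by
  have h₁ := l.normal_eq_of_mem_edges h (Sym2.mem_mk_left _ _)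
  have h₂ := l.normal_eq_of_mem_edges h (Sym2.mem_mk_right _ _)
  simp only [map_add, map_nsmul, succ_nsmul] at h₁ h₂
  linarith

lemma normal_ne_zero {e : Sym2 (ℤ × ℤ)} {b u : ℤ × ℤ} (he : e ∈ l.edges)
    (hu : TGrid.Adj b (b + u)) (h : edir s(b, b + u) ≠ edir e) : l.normal u ≠ 0 := by
  obtain ⟨t, rfl⟩ := he
  rw [tGrid_adj_iff, add_sub_cancel_left] at hu
  rw [edir_mk, add_sub_cancel_left] at h
  simp only [gridSteps, Finset.mem_insert, Finset.mem_singleton] at hu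
  obtain ⟨_ | _ | _, c⟩ := l <;> rcases hu with rfl | rfl | rfl | rfl | rfl | rfl <;>
    simp_all [normal, edge, pt, edir_mk]

end GridLine

section Walk

variable {x y : ℤ × ℤ} (p : TGrid.Walk x y)

def wStep (t : ℕ) : ℤ × ℤ := p.getVert (t + 1) - p.getVert t

lemma wStep_mem_gridSteps {t : ℕ} (ht : t < p.length) : wStep p t ∈ gridSteps :=
  tGrid_adj_iff.mp (p.adj_getVert_succ ht)

lemma edir_wEdge (t : ℕ) : edir (wEdge p t) = (|(wStep p t).1|, |(wStep p t).2|) :=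
  edir_mk _ _

lemma mem_edges_iff_exists_wEdge {e : Sym2 (ℤ × ℤ)} :
    e ∈ p.edges ↔ ∃ t < p.length, wEdge p t = e := by
  induction e using Sym2.ind
  exact p.mk_mem_edges_iff_exists

lemma getVert_eq_add_nsmul {i j : ℕ} {d : ℤ × ℤ} (h : ∀ t, i ≤ t → t < j → wStep p t = d)
    {t : ℕ} (hit : i ≤ t) (htj : t ≤ j) : p.getVert t = p.getVert i + (t - i) • d := by
  induction t, hit using Nat.le_induction with
  | base => simp
  | succ t hit ih =>
    rw [Nat.sub_add_comm hit, succ_nsmul, ← add_assoc, ← ih (by omega), ← h t hit htj, wStep,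
      add_sub_cancel]

lemma wEdge_eq_rayEdge {i j : ℕ} {d : ℤ × ℤ} (h : ∀ t, i ≤ t → t < j → wStep p t = d)
    {t : ℕ} (hit : i ≤ t) (htj : t < j) : wEdge p t = rayEdge (p.getVert i) d (t - i) := by
  rw [wEdge, rayEdge, getVert_eq_add_nsmul p h hit htj.le,
    getVert_eq_add_nsmul p h (t := t + 1) (by omega) htj, Nat.sub_add_comm hit]

lemma wEdge_eq_rayEdge_neg {i j : ℕ} {d : ℤ × ℤ} (h : ∀ t, i ≤ t → t < j → wStep p t = d)
    {t : ℕ} (hit : i ≤ t) (htj : t < j) :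
    wEdge p t = rayEdge (p.getVert j) (-d) (j - 1 - t) := by
  rw [wEdge, rayEdge, getVert_eq_add_nsmul p h hit htj.le,
    getVert_eq_add_nsmul p h (t := t + 1) (by omega) htj,
    getVert_eq_add_nsmul p h (t := j) (by omega) le_rfl, Sym2.eq_swap, Sym2.eq_iff]
  obtain ⟨s, rfl⟩ := Nat.exists_eq_add_of_le hit
  obtain ⟨r, rfl⟩ := Nat.exists_eq_add_of_lt htj
  simp only [show i + s + r + 1 - i = s + r + 1 by omega, show i + s - i = s by omega,
    show i + s + r + 1 - 1 - (i + s) = r by omega, show i + s + 1 - i = s + 1 by omega,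
    add_nsmul, one_nsmul, smul_neg]
  left
  constructor <;> abel

lemma SimpleGraph.Walk.IsPath.wStep_succ_eq {p : TGrid.Walk x y} (hp : p.IsPath) {t : ℕ}
    (ht : t + 1 < p.length) (h : edir (wEdge p t) = edir (wEdge p (t + 1))) :
    wStep p (t + 1) = wStep p t := by
  rcases gridSteps_eq_or_eq_neg_of_abs_eq (wStep_mem_gridSteps p (by omega))
    (wStep_mem_gridSteps p ht) ((edir_wEdge p t).symm.trans (h.trans (edir_wEdge p _)))
    with h' | h'
  · exact h'
  · have hback : p.getVert (t + 2) = p.getVert t :=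
      calc p.getVert (t + 2) = wStep p (t + 1) + p.getVert (t + 1) := (sub_add_cancel _ _).symm
        _ = p.getVert t := by rw [h', wStep]; abel
    exact absurd (hp.getVert_injOn (by simp; omega) (by simp; omega) hback) (by omega)

lemma SimpleGraph.Walk.IsPath.wStep_eq_of_edir_eq {p : TGrid.Walk x y} (hp : p.IsPath) {i j : ℕ}
    (hj : j ≤ p.length)
    (h : ∀ t, i ≤ t → t + 1 < j → edir (wEdge p t) = edir (wEdge p (t + 1)))
    {t : ℕ} (hit : i ≤ t) (htj : t < j) : wStep p t = wStep p i := by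
  induction t, hit using Nat.le_induction with
  | base => rfl
  | succ t hit ih => rw [hp.wStep_succ_eq (by omega) (h t hit htj), ih (by omega)]

lemma exists_bend_index_of_bendCount_eq_one (h : bendCount p = 1) :
    ∃ a, a + 1 < p.length ∧ ∀ j, j + 1 < p.length →
      (edir (wEdge p j) ≠ edir (wEdge p (j + 1)) ↔ j = a) := by
  rw [bendCount, List.countP_eq_length_filter, List.length_eq_one_iff] at h
  obtain ⟨a, ha⟩ := h
  have hmem (j : ℕ) := congrArg (j ∈ ·) ha
  simp only [List.mem_filter, List.mem_range, decide_eq_true_eq, List.mem_singleton] at hmem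
  refine ⟨a, ?_, fun j hj => ?_⟩
  · have := ((hmem a).mpr rfl).1
    omega
  · rw [← hmem j]
    exact ⟨fun hne => ⟨by omega, hne⟩, And.right⟩

end Walk

namespace Segment

lemma mem_pts_of_mem_edges {P : TPath} (s : Segment P) {e : Sym2 (ℤ × ℤ)} {q : ℤ × ℤ}
    (he : e ∈ s.edges) (hq : q ∈ e) : q ∈ s.pts := by
  obtain ⟨t, hit, htj, rfl⟩ := he
  rcases Sym2.mem_iff.mp hq with rfl | rfl
  · exact ⟨t, hit, htj.le, rfl⟩
  · exact ⟨t + 1, by omega, htj, rfl⟩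

lemma disjoint_edges_of_subsingleton {P₁ P₂ : TPath} {s₁ : Segment P₁} {s₂ : Segment P₂}
    (h : (s₁.pts ∩ s₂.pts).Subsingleton) : Disjoint s₁.edges s₂.edges := by
  refine Set.disjoint_left.mpr fun e he₁ he₂ => ?_
  have hpts (q : ℤ × ℤ) (hq : q ∈ e) : q ∈ s₁.pts ∩ s₂.pts :=
    ⟨s₁.mem_pts_of_mem_edges he₁ hq, s₂.mem_pts_of_mem_edges he₂ hq⟩
  obtain ⟨t, -, htj, rfl⟩ := he₁
  exact (P₁.walk.adj_getVert_succ (htj.trans_le s₁.le)).ne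
    (h (hpts _ (Sym2.mem_mk_left _ _)) (hpts _ (Sym2.mem_mk_right _ _)))

variable {P : TPath} (s : Segment P)

lemma eq_or_eq_of_bend_index {a : ℕ} (ha : a + 1 < P.walk.length)
    (hbend : ∀ j, j + 1 < P.walk.length →
      (edir (wEdge P.walk j) ≠ edir (wEdge P.walk (j + 1)) ↔ j = a)) :
    s.i = 0 ∧ s.j = a + 1 ∨ s.i = a + 1 ∧ s.j = P.walk.length := by
  have hij := s.lt
  have hjl := s.le
  have hi : s.i = 0 ∨ s.i = a + 1 := by
    refine s.maxLeft.imp id fun h => ?_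
    have hi0 : s.i ≠ 0 := by rintro h0; simp [h0] at h
    have := (hbend (s.i - 1) (by omega)).mp (by rwa [Nat.sub_add_cancel (by omega)])
    omega
  have hj : s.j = a + 1 ∨ s.j = P.walk.length := by
    rcases Nat.lt_or_ge s.j P.walk.length with hj | hj
    · refine .inl (s.maxRight.elim (by omega) fun h => ?_)
      have := (hbend (s.j - 1) (by omega)).mp (by rwa [Nat.sub_add_cancel (by omega)])
      omega
    · exact .inr (by omega)
  rcases hi with hi | hi <;> rcases hj with hj | hj
  · exact .inl ⟨hi, hj⟩
  · refine absurd ((hbend a ha).mpr rfl) (not_not.mpr ?_)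
    rw [s.straight a (by omega) (by omega), s.straight (a + 1) (by omega) (by omega)]
  · omega
  · exact .inr ⟨hi, hj⟩

end Segment

lemma Segment.exists_leg {P : TPath} (h : bendCount P.walk = 1) (s : Segment P) :
    ∃ b u, IsBendAt P.walk b ∧ rayEdge b u 0 ∈ pEdges P ∧
      (∃ e ∈ s.edges, b ∈ e ∧ edir (rayEdge b u 0) ≠ edir e) ∧
      ∀ e ∈ pEdges P, e ∈ s.edges ∨ ∃ k, e = rayEdge b u k := by
  obtain ⟨a, ha, hbend⟩ := exists_bend_index_of_bendCount_eq_one _ h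
  have hstraight (i j : ℕ) (hj : j ≤ P.walk.length) (hij : a + 1 ≤ i ∨ j ≤ a + 1) :
      ∀ t, i ≤ t → t < j → wStep P.walk t = wStep P.walk i :=
    fun t hit htj => P.isPath.wStep_eq_of_edir_eq hj (fun t' hit' ht'j => by
      by_contra hne
      have := (hbend t' (by omega)).mp hne
      omega) hit htj
  have hne : edir (wEdge P.walk a) ≠ edir (wEdge P.walk (a + 1)) := (hbend a ha).mpr rfl
  have hbendAt : IsBendAt P.walk (P.walk.getVert (a + 1)) := ⟨a, ha, rfl, hne⟩
  have hmem (t : ℕ) (ht : t < P.walk.length) : wEdge P.walk t ∈ pEdges P :=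
    (mem_edges_iff_exists_wEdge _).mpr ⟨t, ht, rfl⟩
  rcases s.eq_or_eq_of_bend_index ha hbend with ⟨hi, hj⟩ | ⟨hi, hj⟩
  · have hleg (t : ℕ) (hat : a + 1 ≤ t) (ht : t < P.walk.length) :=
      wEdge_eq_rayEdge P.walk (hstraight (a + 1) P.walk.length le_rfl (.inl le_rfl)) hat ht
    have h0 : wEdge P.walk (a + 1) = rayEdge (P.walk.getVert (a + 1)) (wStep P.walk (a + 1)) 0 :=
      by simpa using hleg _ le_rfl ha
    refine ⟨_, _, hbendAt, h0 ▸ hmem _ ha,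
      ⟨wEdge P.walk a, ⟨a, by omega, by omega, rfl⟩, Sym2.mem_mk_right _ _, h0 ▸ hne.symm⟩,
      fun e he => ?_⟩
    obtain ⟨t, ht, rfl⟩ := (mem_edges_iff_exists_wEdge _).mp he
    rcases Nat.lt_or_ge t (a + 1) with hta | hta
    · exact .inl ⟨t, by omega, by omega, rfl⟩
    · exact .inr ⟨_, hleg t hta ht⟩
  · have hleg (t : ℕ) (hta : t < a + 1) :=
      wEdge_eq_rayEdge_neg P.walk (hstraight 0 (a + 1) ha.le (.inr le_rfl)) t.zero_le hta
    have h0 : wEdge P.walk a = rayEdge (P.walk.getVert (a + 1)) (-wStep P.walk 0) 0 := by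
      simpa using hleg a a.lt_succ_self
    refine ⟨_, _, hbendAt, h0 ▸ hmem _ (by omega),
      ⟨wEdge P.walk (a + 1), ⟨a + 1, by omega, by omega, rfl⟩, Sym2.mem_mk_left _ _, h0 ▸ hne⟩,
      fun e he => ?_⟩
    obtain ⟨t, ht, rfl⟩ := (mem_edges_iff_exists_wEdge _).mp he
    rcases Nat.lt_or_ge t (a + 1) with hta | hta
    · exact .inr ⟨_, hleg t hta⟩
    · exact .inl ⟨t, by omega, by omega, rfl⟩

lemma Segment.exists_transversal_leg {P : TPath} (h : bendCount P.walk = 1) (s : Segment P)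
    {l : GridLine} (hl : s.edges ⊆ l.edges) :
    ∃ b u, b ∈ s.pts ∧ IsBendAt P.walk b ∧ l.normal b = l.c ∧ l.normal u ≠ 0 ∧
      rayEdge b u 0 ∈ pEdges P ∧ ∀ e ∈ pEdges P, e ∈ s.edges ∨ ∃ k, e = rayEdge b u k := by
  obtain ⟨b, u, hbend, hray, ⟨e, hes, hbe, hdir⟩, hleg⟩ := s.exists_leg h
  rw [rayEdge_zero] at hray hdir
  exact ⟨b, u, s.mem_pts_of_mem_edges hes hbe, hbend, l.normal_eq_of_mem_edges (hl hes) hbe,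
    l.normal_ne_zero (hl hes) (P.walk.adj_of_mem_edges hray) hdir, by simpa using hray, hleg⟩

/-- If segments of two exactly-one-bend paths lie on the same grid
line and share exactly one grid point `b`, and the paths share an edge, then `b` is
the bend point of both paths, `b` is an endpoint of some common edge, and the edge
intersection is not contained in the line. -/
theorem stmt2 (P1 P2 : TPath)
    (h1 : bendCount P1.walk = 1) (h2 : bendCount P2.walk = 1)
    (s1 : Segment P1) (s2 : Segment P2) (l : GridLine)
    (hl1 : s1.edges ⊆ l.edges) (hl2 : s2.edges ⊆ l.edges)
    (b : ℤ × ℤ) (hb : s1.pts ∩ s2.pts = {b})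
    (hint : (pEdges P1 ∩ pEdges P2).Nonempty) :
    IsBendAt P1.walk b ∧ IsBendAt P2.walk b ∧
    (∃ e ∈ pEdges P1 ∩ pEdges P2, b ∈ e) ∧
    ¬ (pEdges P1 ∩ pEdges P2 ⊆ l.edges) := by
  obtain ⟨e, he₁, he₂⟩ := hint
  obtain ⟨b₁, u₁, hbs₁, hbend₁, hbl₁, hu₁, hray₁, hleg₁⟩ := s1.exists_transversal_leg h1 hl1
  obtain ⟨b₂, u₂, hbs₂, hbend₂, hbl₂, hu₂, hray₂, hleg₂⟩ := s2.exists_transversal_leg h2 hl2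
  rcases hleg₁ e he₁ with hs₁ | ⟨k₁, rfl⟩ <;> rcases hleg₂ _ he₂ with hs₂ | ⟨k₂, hk⟩
  · exact (Set.disjoint_left.mp
      (Segment.disjoint_edges_of_subsingleton (hb ▸ Set.subsingleton_singleton)) hs₁ hs₂).elim
  · exact (hu₂ (l.normal_eq_zero_of_rayEdge_mem_edges (hk ▸ hl1 hs₁))).elim
  · exact (hu₁ (l.normal_eq_zero_of_rayEdge_mem_edges (hl2 hs₂))).elim
  · obtain ⟨rfl, rfl⟩ := eq_and_eq_of_rayEdge_eq l.normal (hbl₁.trans hbl₂.symm) hu₂ hk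
    obtain rfl : b₁ = b := hb.subset ⟨hbs₁, hbs₂⟩
    exact ⟨hbend₁, hbend₂, ⟨_, ⟨hray₁, hray₂⟩, by simp⟩,
      fun hsub => hu₁ (l.normal_eq_zero_of_rayEdge_mem_edges (hsub ⟨hray₁, hray₂⟩))⟩
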